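/- Let I_S : L^p([0,1)) → S be a linear projection onto a finite-dimensional subspace S, and define I_{b,d,S} by (I_{b,d,S}f)(b^{−d}(j+·)) = I_S(f(b^{−d}(j+·))) for 0 ≤ j < b^d. Then for any f ∈ L^p([0,1)) and all 1 ≤ ν ≤ d, the local projection does not increase ranks: r_{ν}(I_{b,d,S} f) ≤ r_{ν}(f), where r_ν(g) := dim span{g(b^{−ν}(j+·)) : 0 ≤ j ≤ b^ν − 1}. -/

import Mathlib

/-!
On each `b`-adic interval of level `d`, `I_{b,d,S}` acts as `I_S` on the rescaled piece. Since
`ν ≤ d`, each level-`ν` piece of `I_{b,d,S} f` is therefore obtained from the corresponding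
level-`ν` piece of `f` by one and the same linear map, namely the analogous local operator of
level `d - ν`. The span of the pieces of `I_{b,d,S} f` is thus contained in the image of the
span of the pieces of `f` under a linear map, and linear maps do not increase dimension.
-/

/-- The `ν`-th rank of `g`: the dimension of the span of the `b^ν` pieces of `g` on the
`b`-adic intervals of level `ν`, rescaled to `[0,1)`. -/
noncomputable def rnk (b ν : ℕ) (g : ℝ → ℝ) : ℕ :=
  Module.finrank ℝ (Submodule.span ℝ
    {h : ℝ → ℝ | ∃ j : ℕ, j < b ^ ν ∧ h = fun y => g (((j : ℝ) + y) / (b : ℝ) ^ ν)})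

open Submodule

/-- `localize c T u` is `T` applied to `u` separately on each interval `[j / c, (j + 1) / c)`,
after rescaling that interval to `[0, 1)`. -/
noncomputable def localize (c : ℝ) (T : (ℝ → ℝ) →ₗ[ℝ] (ℝ → ℝ)) : (ℝ → ℝ) →ₗ[ℝ] (ℝ → ℝ) :=
  LinearMap.pi fun x => LinearMap.proj (c * x - ⌊c * x⌋) ∘ₗ T ∘ₗ
    LinearMap.funLeft ℝ ℝ fun y => (⌊c * x⌋ + y) / c

theorem localize_apply (c : ℝ) (T : (ℝ → ℝ) →ₗ[ℝ] (ℝ → ℝ)) (u : ℝ → ℝ) (x : ℝ) :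
    localize c T u x = T (fun y => u ((⌊c * x⌋ + y) / c)) (c * x - ⌊c * x⌋) :=
  rfl

theorem localize_natCast_mul_rescale {m : ℕ} (hm : m ≠ 0) {q : ℝ} (hq : q ≠ 0)
    (T : (ℝ → ℝ) →ₗ[ℝ] (ℝ → ℝ)) (u : ℝ → ℝ) (j : ℕ) :
    (fun y => localize (m * q) T u ((j + y) / q)) = localize m T (fun y => u ((j + y) / q)) := by
  have hm' : (m : ℝ) ≠ 0 := Nat.cast_ne_zero.mpr hm
  ext y
  have hscale : (m * q) * ((j + y) / q) = ((m * j : ℕ) : ℝ) + m * y := by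
    push_cast
    field_simp
  have hfloor : (⌊(m * q) * ((j + y) / q)⌋ : ℝ) = ((m * j : ℕ) : ℝ) + ⌊m * y⌋ := by
    rw [hscale, Int.floor_natCast_add]
    push_cast
    rfl
  rw [localize_apply, localize_apply, hfloor, hscale]
  refine congr (congrArg T (funext fun t => congrArg u ?_)) (by push_cast; ring)
  push_cast
  field_simp
  ring

theorem rnk_eq_finrank_span_image (b ν : ℕ) (g : ℝ → ℝ) :
    rnk b ν g = Module.finrank ℝ (span ℝ
      ((fun j : ℕ => fun y => g ((j + y) / (b : ℝ) ^ ν)) '' Set.Iio (b ^ ν))) := by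
  have hpieces : {h : ℝ → ℝ | ∃ j : ℕ, j < b ^ ν ∧ h = fun y => g ((j + y) / (b : ℝ) ^ ν)} =
      (fun j : ℕ => fun y => g ((j + y) / (b : ℝ) ^ ν)) '' Set.Iio (b ^ ν) := by
    ext h
    simp [eq_comm]
  rw [rnk, hpieces]

theorem rnk_le_of_pieces_eq_map (T : (ℝ → ℝ) →ₗ[ℝ] (ℝ → ℝ)) {b ν : ℕ} {f g : ℝ → ℝ}
    (hpieces : ∀ j < b ^ ν,
      (fun y => g ((j + y) / (b : ℝ) ^ ν)) = T (fun y => f ((j + y) / (b : ℝ) ^ ν))) :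
    rnk b ν g ≤ rnk b ν f := by
  set pieces := (fun j : ℕ => fun y => f ((j + y) / (b : ℝ) ^ ν)) '' Set.Iio (b ^ ν)
  have : FiniteDimensional ℝ (span ℝ pieces) :=
    FiniteDimensional.span_of_finite ℝ ((Set.finite_Iio _).image _)
  have hsub : (fun j : ℕ => fun y => g ((j + y) / (b : ℝ) ^ ν)) '' Set.Iio (b ^ ν) ⊆
      T '' pieces := by
    rintro _ ⟨j, hj, rfl⟩
    exact ⟨_, Set.mem_image_of_mem _ hj, (hpieces j hj).symm⟩
  rw [rnk_eq_finrank_span_image, rnk_eq_finrank_span_image]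
  calc _ ≤ Module.finrank ℝ ((span ℝ pieces).map T) :=
        finrank_mono (span_image T ▸ span_mono hsub)
    _ ≤ _ := finrank_map_le T _

theorem stmt17_general (b d : ℕ) (hb : 2 ≤ b)
    (IS : (ℝ → ℝ) →ₗ[ℝ] (ℝ → ℝ))
    (f : ℝ → ℝ) :
    ∀ ν : ℕ, 1 ≤ ν → ν ≤ d →
      rnk b ν (fun x =>
        IS (fun y => f (((⌊(b : ℝ) ^ d * x⌋ : ℝ) + y) / (b : ℝ) ^ d))
          ((b : ℝ) ^ d * x - (⌊(b : ℝ) ^ d * x⌋ : ℝ)))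
        ≤ rnk b ν f := by
  intro ν _ hνd
  have hb0 : b ≠ 0 := by omega
  have hsplit : (b : ℝ) ^ d = ((b ^ (d - ν) : ℕ) : ℝ) * (b : ℝ) ^ ν := by
    rw [Nat.cast_pow, ← pow_add, Nat.sub_add_cancel hνd]
  change rnk b ν (localize ((b : ℝ) ^ d) IS f) ≤ _
  rw [hsplit]
  exact rnk_le_of_pieces_eq_map _ fun j _ =>
    localize_natCast_mul_rescale (pow_ne_zero _ hb0) (by positivity) IS f j

/-- Local projection does not increase ranks: if `I_S` is a linear projection onto a
finite-dimensional subspace `S`, and `I_{b,d,S}f` is defined piecewise by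
`(I_{b,d,S}f)(b^{−d}(j+·)) = I_S(f(b^{−d}(j+·)))`, then `r_ν(I_{b,d,S}f) ≤ r_ν(f)`
for all `1 ≤ ν ≤ d`. -/
theorem stmt17 (b d : ℕ) (hb : 2 ≤ b) (hd : 1 ≤ d)
    (S : Submodule ℝ (ℝ → ℝ)) [FiniteDimensional ℝ S]
    (IS : (ℝ → ℝ) →ₗ[ℝ] (ℝ → ℝ))
    (hrange : ∀ g : ℝ → ℝ, IS g ∈ S) (hproj : ∀ g ∈ S, IS g = g)
    (f : ℝ → ℝ) :
    ∀ ν : ℕ, 1 ≤ ν → ν ≤ d →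
      rnk b ν (fun x =>
        IS (fun y => f (((⌊(b : ℝ) ^ d * x⌋ : ℝ) + y) / (b : ℝ) ^ d))
          ((b : ℝ) ^ d * x - (⌊(b : ℝ) ^ d * x⌋ : ℝ)))
        ≤ rnk b ν f :=
  stmt17_general b d hb IS f
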